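/- Generating-function square lemma (single-variable case m=1, d=d₁): let z be the formal power series with z(0)=1 solving 1 − z + s·z^{d+1} = 0, and define F(s) = (s/(d+2))·z^{d+2} − z²/2 + z. Then F(s) = Σ_{k≥0} [C(2+(d+1)k, k)/((1+(d+1)k)(2+(d+1)k))]·s^k, where C denotes the binomial coefficient. -/

import Mathlib

open PowerSeries

noncomputable def G (d a k : ℕ) : ℚ :=
  (a : ℚ) / ((a : ℚ) + ((d : ℚ) + 1) * k) * (((a + (d + 1) * k).choose k : ℕ) : ℚ)

lemma key_binom' (d b k : ℕ) :
    G d (b + 1) (k + 1) = G d b (k + 1) + G d (b + 1 + d) k := by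
  have e1 : (b + 1) + (d + 1) * (k + 1) = (b + (d + 1) * (k + 1)) + 1 := by ring
  have e2 : (b + 1 + d) + (d + 1) * k = b + (d + 1) * (k + 1) := by ring
  unfold G
  rw [e1, e2, Nat.choose_succ_succ']
  set N : ℕ := b + (d + 1) * (k + 1) with hN
  have hk : k ≤ N := by
    have h1 : (d + 1) * (k + 1) = (d + 1) * k + (d + 1) := by ring
    have h2 : k ≤ (d + 1) * k := Nat.le_mul_of_pos_left k (by omega)
    omega
  have hrel : ((N.choose (k + 1) : ℕ) : ℚ) * (k + 1) = (N.choose k : ℚ) * ((N : ℚ) - k) := by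
    have h := Nat.choose_succ_right_eq N k
    have hc : ((N - k : ℕ) : ℚ) = (N : ℚ) - k := Nat.cast_sub hk
    calc ((N.choose (k + 1) : ℕ) : ℚ) * (k + 1)
        = ((N.choose (k+1) * (k+1) : ℕ) : ℚ) := by push_cast; ring
      _ = ((N.choose k * (N - k) : ℕ) : ℚ) := by rw [h]
      _ = (N.choose k : ℚ) * ((N : ℚ) - k) := by push_cast [hc]; ring
  have hNb : (N : ℚ) = b + (d + 1) * (k + 1) := by rw [hN]; push_cast; ring
  have hd1 : ((b : ℚ) + ((d : ℚ) + 1) * ((k : ℚ) + 1)) ≠ 0 := by positivity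
  have hd2 : ((b : ℚ) + 1 + ((d : ℚ) + 1) * ((k : ℚ) + 1)) ≠ 0 := by positivity
  have hd3 : ((k : ℚ) + 1) ≠ 0 := by positivity
  push_cast
  rw [hNb] at hrel
  set x : ℚ := (N.choose k : ℚ) with hx
  set y : ℚ := (N.choose (k + 1) : ℚ) with hy
  have hy' : y = x * ((b : ℚ) + ((d : ℚ) + 1) * ((k : ℚ) + 1) - k) / (k + 1) := by
    field_simp
    linarith [hrel]
  rw [hy']
  field_simp
  ring

lemma coeff_zpow (d : ℕ) (z : PowerSeries ℚ)
    (hz0 : PowerSeries.constantCoeff z = 1)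
    (hz' : z = 1 + PowerSeries.X * z ^ (d + 1)) :
    ∀ k a : ℕ, PowerSeries.coeff k (z ^ (a + 1)) = G d (a + 1) k := by
  intro k
  induction k with
  | zero =>
    intro a
    have hne : ((a : ℚ) + 1) ≠ 0 := by positivity
    simp [G, PowerSeries.coeff_zero_eq_constantCoeff, map_pow, hz0]
    field_simp
  | succ k ih =>
    intro a
    have hsplit : ∀ b : ℕ, PowerSeries.coeff (k+1) (z ^ (b + 1)) =
        PowerSeries.coeff (k+1) (z ^ b) + PowerSeries.coeff k (z ^ (b + d + 1)) := by
      intro b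
      have : z ^ (b + 1) = z ^ b + PowerSeries.X * z ^ (b + d + 1) := by
        calc z ^ (b + 1) = z ^ b * z := by ring
          _ = z ^ b * (1 + PowerSeries.X * z ^ (d + 1)) := by rw [← hz']
          _ = z ^ b + PowerSeries.X * z ^ (b + d + 1) := by ring
      rw [this, map_add, PowerSeries.coeff_succ_X_mul]
    induction a with
    | zero =>
      rw [hsplit 0]
      have h1 : PowerSeries.coeff (k+1) (z ^ 0) = 0 := by
        simp [PowerSeries.coeff_one]
      rw [h1, show (0:ℕ) + d + 1 = d + 1 from by ring, ih d, zero_add]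
      have := key_binom' d 0 k
      have hG0 : G d 0 (k + 1) = 0 := by simp [G]
      rw [hG0, zero_add] at this
      rw [show 0 + 1 + d = d + 1 from by ring] at this
      rw [this]; ring
    | succ a iha =>
      rw [hsplit (a + 1), iha, show a + 1 + d + 1 = (a + d + 1) + 1 from by ring, ih (a + d + 1)]
      have := key_binom' d (a + 1) k
      rw [show a + 1 + 1 + d = a + d + 1 + 1 from by ring] at this
      exact this.symm


lemma final_id (d k : ℕ) :
    (1/((d:ℚ)+2)) * (((2 : ℚ) / ((2 : ℚ) + ((d : ℚ) + 1) * k) * (((2 + (d + 1) * k).choose k : ℕ) : ℚ))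
        - ((1 : ℚ) / ((1 : ℚ) + ((d : ℚ) + 1) * k) * (((1 + (d + 1) * k).choose k : ℕ) : ℚ)))
      - (1/2) * ((2 : ℚ) / ((2 : ℚ) + ((d : ℚ) + 1) * k) * (((2 + (d + 1) * k).choose k : ℕ) : ℚ))
      + ((1 : ℚ) / ((1 : ℚ) + ((d : ℚ) + 1) * k) * (((1 + (d + 1) * k).choose k : ℕ) : ℚ))
    = (((2 + (d + 1) * k).choose k : ℕ) : ℚ) /
        (((1 + (d + 1) * k : ℕ) : ℚ) * ((2 + (d + 1) * k : ℕ) : ℚ)) := by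
  have hk : k ≤ 1 + (d + 1) * k := by
    have := Nat.le_mul_of_pos_left k (show 0 < d + 1 by omega)
    omega
  have h := Nat.choose_mul_succ_eq (1 + (d + 1) * k) k
  -- (1+n).choose k * (2+n) = (2+n).choose k * (2+n-k)
  have hc : ((1 + (d + 1) * k + 1 - k : ℕ) : ℚ)
      = (1 : ℚ) + ((d : ℚ) + 1) * k + 1 - k := by
    rw [Nat.cast_sub (by omega)]; push_cast; ring
  have hrel : (((1 + (d + 1) * k).choose k : ℕ) : ℚ) * ((1:ℚ) + ((d:ℚ)+1)*k + 1)
      = (((2 + (d + 1) * k).choose k : ℕ) : ℚ) * ((1:ℚ) + ((d:ℚ)+1)*k + 1 - k) := by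
    calc (((1 + (d + 1) * k).choose k : ℕ) : ℚ) * ((1:ℚ) + ((d:ℚ)+1)*k + 1)
        = (((1 + (d + 1) * k).choose k * (1 + (d + 1) * k + 1) : ℕ) : ℚ) := by push_cast; ring
      _ = (((1 + (d + 1) * k + 1).choose k * (1 + (d + 1) * k + 1 - k) : ℕ) : ℚ) := by rw [h]
      _ = (((2 + (d + 1) * k).choose k : ℕ) : ℚ) * ((1:ℚ) + ((d:ℚ)+1)*k + 1 - k) := by
          rw [show 1 + (d + 1) * k + 1 = 2 + (d + 1) * k from by ring]
          have hc2 : ((2 + (d + 1) * k - k : ℕ) : ℚ) = (2:ℚ) + ((d:ℚ)+1)*k - k := by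
            rw [Nat.cast_sub (by omega)]; push_cast; ring
          push_cast [hc2]
          ring
  set x : ℚ := (((2 + (d + 1) * k).choose k : ℕ) : ℚ) with hx
  set c : ℚ := (((1 + (d + 1) * k).choose k : ℕ) : ℚ) with hcdef
  have h1 : ((1:ℚ) + ((d:ℚ)+1)*k) ≠ 0 := by positivity
  have h2 : ((2:ℚ) + ((d:ℚ)+1)*k) ≠ 0 := by positivity
  have h3 : ((d:ℚ)+2) ≠ 0 := by positivity
  have hcN : ((1 + (d + 1) * k : ℕ) : ℚ) = (1:ℚ) + ((d:ℚ)+1)*k := by push_cast; ring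
  have hcN2 : ((2 + (d + 1) * k : ℕ) : ℚ) = (2:ℚ) + ((d:ℚ)+1)*k := by push_cast; ring
  rw [hcN, hcN2]
  have hcval : c = x * ((1:ℚ) + ((d:ℚ)+1)*k + 1 - k) / ((1:ℚ) + ((d:ℚ)+1)*k + 1) := by
    have hne : ((1:ℚ) + ((d:ℚ)+1)*k + 1) ≠ 0 := by positivity
    field_simp
    linarith [hrel]
  rw [hcval]
  field_simp
  ring

/-- Generating-function lemma (single-variable case): if `z` is the formal power
series with constant term `1` satisfying `1 − z + s·z^{d+1} = 0`, and
`F = (s/(d+2))·z^{d+2} − z²/2 + z`, then the coefficient of `s^k` in `F` is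
`C(2+(d+1)k, k)/((1+(d+1)k)(2+(d+1)k))`. -/
theorem F_coefficients (d : ℕ) (z : PowerSeries ℚ)
    (hz0 : PowerSeries.constantCoeff z = 1)
    (hz : 1 - z + PowerSeries.X * z ^ (d + 1) = 0) (k : ℕ) :
    PowerSeries.coeff k
        (PowerSeries.C (1 / ((d : ℚ) + 2)) * PowerSeries.X * z ^ (d + 2) -
          PowerSeries.C (1 / 2 : ℚ) * z ^ 2 + z) =
      (((2 + (d + 1) * k).choose k : ℚ)) /
        (((1 + (d + 1) * k : ℕ) : ℚ) * ((2 + (d + 1) * k : ℕ) : ℚ)) := by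

  have hz' : z = 1 + PowerSeries.X * z ^ (d + 1) := by linear_combination -hz
  have hXz : PowerSeries.X * z ^ (d + 2) = z ^ 2 - z := by
    linear_combination z * hz
  have hF : PowerSeries.C (1 / ((d : ℚ) + 2)) * PowerSeries.X * z ^ (d + 2) -
        PowerSeries.C (1 / 2 : ℚ) * z ^ 2 + z
      = PowerSeries.C (1 / ((d : ℚ) + 2)) * (z ^ 2 - z) -
        PowerSeries.C (1 / 2 : ℚ) * z ^ 2 + z := by
    rw [mul_assoc, hXz]
  rw [hF]
  have hcz : PowerSeries.coeff k z = G d 1 k := by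
    have := coeff_zpow d z hz0 hz' k 0
    simpa using this
  have hcz2 : PowerSeries.coeff k (z ^ 2) = G d 2 k := coeff_zpow d z hz0 hz' k 1
  rw [map_add, map_sub, PowerSeries.coeff_C_mul, PowerSeries.coeff_C_mul, map_sub,
    hcz, hcz2]
  have := final_id d k
  unfold G at *
  push_cast at this ⊢
  linarith [this]
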